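/- arXiv:2008.12465 — 4 statements merged into one kernel-verified Lean document; each statement's English description precedes it below -/
import Mathlib

section
/- For all complex z with |Im(z)| < π, if cos(Im(z)) ≥ 0 then 1/|1 + e^z| ≤ 1, and if cos(Im(z)) ≤ 0 then 1/|1 + e^z| ≤ 1/|sin(Im(z))|. -/
/-!
For `cos (Im z) ≥ 0` the real part of `1 + e^z` is already at least `1`. In general, multiplying
by the unit `e^{-i Im z}` turns `1 + e^z` into `e^{-i Im z} + e^{Re z}`, whose imaginary part is
`-sin (Im z)`; so `|1 + e^z| ≥ |sin (Im z)|`, the distance from `-1` to the line `ℝ e^{i Im z}`.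
When `cos (Im z) ≤ 0` and `|Im z| < π`, `sin (Im z) ≠ 0`, and both bounds invert.
-/

open Complex

theorem Complex.one_le_norm_one_add_exp {z : ℂ} (hz : 0 ≤ Real.cos z.im) : 1 ≤ ‖1 + exp z‖ :=
  calc 1 ≤ (1 + exp z).re := by
        rw [add_re, one_re, exp_re]
        have := Real.exp_pos z.re
        nlinarith
    _ ≤ ‖1 + exp z‖ := re_le_norm _

theorem Complex.abs_sin_im_le_norm_one_add_exp (z : ℂ) : |Real.sin z.im| ≤ ‖1 + exp z‖ := by
  set u := exp ((-z.im : ℝ) * I)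
  have hrot : u * (1 + exp z) = u + Real.exp z.re := by
    rw [mul_add, mul_one, ← exp_add, ofReal_exp]
    congr 2
    apply Complex.ext <;> simp
  calc |Real.sin z.im| = |(u * (1 + exp z)).im| := by
        rw [hrot, add_im, exp_ofReal_mul_I_im, ofReal_im, Real.sin_neg, add_zero, abs_neg]
    _ ≤ ‖u * (1 + exp z)‖ := abs_im_le_norm _
    _ = ‖1 + exp z‖ := by rw [norm_mul, norm_exp_ofReal_mul_I, one_mul]

theorem Real.sin_ne_zero_of_cos_nonpos {y : ℝ} (hy : |y| < Real.pi) (hcos : cos y ≤ 0) :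
    sin y ≠ 0 := by
  intro hsin
  have : y = 0 := (sin_eq_zero_iff_of_lt_of_lt (abs_lt.mp hy).1 (abs_lt.mp hy).2).mp hsin
  rw [this, cos_zero] at hcos
  exact one_pos.not_ge hcos

theorem stmt_0 (z : ℂ) (hz : |z.im| < Real.pi) :
    (0 ≤ Real.cos z.im → 1 / ‖1 + Complex.exp z‖ ≤ 1) ∧
    (Real.cos z.im ≤ 0 →
      1 / ‖1 + Complex.exp z‖ ≤ 1 / |Real.sin z.im|) := by
  refine ⟨fun hcos => ?_, fun hcos => ?_⟩
  · exact (one_div_le_one_div_of_le one_pos (one_le_norm_one_add_exp hcos)).trans_eq one_div_one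
  · have hsin : 0 < |Real.sin z.im| := abs_pos.mpr (Real.sin_ne_zero_of_cos_nonpos hz hcos)
    exact one_div_le_one_div_of_le hsin (abs_sin_im_le_norm_one_add_exp z)
end

section
/- For every complex z with |Im(z)| < π, the improper integral ∫₀^∞ ξ/(1 + e^{ξ-z}) dξ converges and equals -Li₂(-e^z). -/
/-- The dilogarithm, defined by the integral representation
`Li₂(w) = -∫₀¹ log(1 - w t)/t dt` (analytic continuation of `∑ w^k/k²`). -/
noncomputable def Li2 (w : ℂ) : ℂ :=
  -∫ t in (0 : ℝ)..1, Complex.log (1 - w * (t : ℂ)) / (t : ℂ)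

/-!
For `|Im z| < π` the denominator `1 + e^{ξ - z}` stays away from `0`: in fact
`‖1 + e^u‖ ≥ cos (Im u / 2) (1 + e^{Re u})`, so the integrand is continuous and `O(ξ e^{-ξ})`.
Integrating by parts against `-log (1 + e^{z - ξ})`, whose derivative is `1 / (1 + e^{ξ - z})`,
turns the integral into `∫₀^∞ log (1 + e^{z - ξ}) dξ`, and the substitution `t = e^{-ξ}` turns
that into `∫₀¹ log (1 + e^z t) / t dt = -Li₂(-e^z)`.
-/

open Complex MeasureTheory Set Filter Topology Asymptotics

namespace Complex

theorem one_add_exp_mem_slitPlane {w : ℂ} (hw : |w.im| < Real.pi) :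
    1 + exp w ∈ slitPlane := by
  rw [mem_slitPlane_iff]
  rcases eq_or_ne w.im 0 with him | him
  · left
    simp only [add_re, one_re, exp_re, him, Real.cos_zero, mul_one]
    positivity
  · right
    have hsin : Real.sin w.im ≠ 0 := by
      rw [abs_lt] at hw
      exact (Real.sin_eq_zero_iff_of_lt_of_lt hw.1 hw.2).not.2 him
    simpa [exp_im] using mul_ne_zero (Real.exp_pos w.re).ne' hsin

theorem cos_half_im_mul_le_norm_one_add_exp (u : ℂ) :
    Real.cos (u.im / 2) * (1 + Real.exp u.re) ≤ ‖1 + exp u‖ := by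
  set r := Real.exp u.re
  set c := Real.cos (u.im / 2)
  -- `‖1 + r e^{iθ}‖² = (1 - r)² + 4 r cos² (θ / 2) ≥ cos² (θ / 2) (1 + r)²`
  have hnorm_sq : ‖1 + exp u‖ ^ 2 = (1 - r) ^ 2 + 4 * r * c ^ 2 := by
    have hcos : Real.cos u.im = 2 * c ^ 2 - 1 := by
      rw [Real.cos_sq, mul_div_cancel₀ _ two_ne_zero]
      ring
    rw [Complex.sq_norm, normSq_apply]
    simp only [add_re, add_im, one_re, one_im, exp_re, exp_im, zero_add]
    linear_combination (r ^ 2) * Real.sin_sq_add_cos_sq u.im + 2 * r * hcos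
  refine le_of_sq_le_sq ?_ (norm_nonneg _)
  have hc : c ^ 2 ≤ 1 := by simpa using Real.cos_sq_le_one (u.im / 2)
  rw [hnorm_sq, mul_pow]
  nlinarith [mul_nonneg (sub_nonneg.2 hc) (sq_nonneg (1 - r))]

end Complex

section ExpSubstitution

variable {E : Type*} [NormedAddCommGroup E] [NormedSpace ℝ E]

theorem integral_comp_exp_Iic (g : ℝ → E) (a : ℝ) :
    ∫ x in Iic a, Real.exp x • g (Real.exp x) = ∫ y in Ioc 0 (Real.exp a), g y := by
  symm; rw [← Real.image_exp_Iic]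
  simpa [abs_of_pos (Real.exp_pos _)] using integral_image_eq_integral_abs_deriv_smul
    measurableSet_Iic (fun x _ ↦ (Real.hasDerivAt_exp x).hasDerivWithinAt)
    Real.exp_injective.injOn g

theorem integral_comp_exp_neg_Ioi_zero (g : ℝ → E) :
    ∫ x in Ioi 0, Real.exp (-x) • g (Real.exp (-x)) = ∫ y in Ioc 0 1, g y := by
  rw [integral_comp_neg_Ioi (f := fun x => Real.exp x • g (Real.exp x)), neg_zero,
    integral_comp_exp_Iic, Real.exp_zero]

end ExpSubstitution

section FermiDirac

variable {z : ℂ}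

theorem continuous_div_one_add_exp_sub (hz : |z.im| < Real.pi) :
    Continuous fun x : ℝ => (x : ℂ) / (1 + exp (x - z)) :=
  continuous_ofReal.div (by fun_prop) fun x =>
    slitPlane_ne_zero (one_add_exp_mem_slitPlane (by simpa using hz))

theorem isBigO_div_one_add_exp_sub (hz : |z.im| < Real.pi) :
    (fun x : ℝ => (x : ℂ) / (1 + exp (x - z))) =O[atTop] fun x => Real.exp (-x) * x := by
  have hc : 0 < Real.cos (z.im / 2) := by
    rw [abs_lt] at hz
    exact Real.cos_pos_of_mem_Ioo ⟨by linarith, by linarith⟩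
  refine IsBigO.of_bound (Real.exp z.re / Real.cos (z.im / 2)) ?_
  filter_upwards [eventually_ge_atTop 0] with x hx
  have hden : Real.cos (z.im / 2) * Real.exp (x - z.re) ≤ ‖1 + exp (x - z)‖ := by
    have := cos_half_im_mul_le_norm_one_add_exp (x - z)
    simp only [sub_im, ofReal_im, zero_sub, neg_div, Real.cos_neg, sub_re, ofReal_re] at this
    nlinarith [Real.exp_pos (x - z.re)]
  calc ‖(x : ℂ) / (1 + exp (x - z))‖ = x / ‖1 + exp (x - z)‖ := by
        rw [norm_div, norm_real, Real.norm_of_nonneg hx]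
    _ ≤ x / (Real.cos (z.im / 2) * Real.exp (x - z.re)) :=
        div_le_div_of_nonneg_left hx (mul_pos hc (Real.exp_pos _)) hden
    _ = Real.exp z.re / Real.cos (z.im / 2) * ‖Real.exp (-x) * x‖ := by
        rw [Real.norm_of_nonneg (by positivity), Real.exp_sub, Real.exp_neg]
        field_simp

theorem integrableOn_div_one_add_exp_sub (hz : |z.im| < Real.pi) :
    IntegrableOn (fun x : ℝ => (x : ℂ) / (1 + exp (x - z))) (Ioi 0) := by
  have hGamma : IntegrableOn (fun x : ℝ => Real.exp (-x) * x) (Ioi 0) :=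
    (Real.GammaIntegral_convergent two_pos).congr_fun
      (fun x _ => by norm_num) measurableSet_Ioi
  exact ((continuous_div_one_add_exp_sub hz).continuousOn.locallyIntegrableOn measurableSet_Ici
    |>.integrableOn_of_isBigO_atTop (isBigO_div_one_add_exp_sub hz)
      ⟨Ioi 0, Ioi_mem_atTop 0, hGamma⟩).mono_set Ioi_subset_Ici_self

theorem hasDerivAt_log_one_add_exp_sub (hz : |z.im| < Real.pi) (x : ℝ) :
    HasDerivAt (fun x : ℝ => log (1 + exp (z - x))) (-(1 + exp (x - z))⁻¹) x := by
  have hslit : 1 + exp (z - x) ∈ slitPlane := one_add_exp_mem_slitPlane (by simpa using hz)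
  have hinner : HasDerivAt (fun w : ℂ => 1 + exp (z - w)) (-exp (z - x)) x := by
    simpa using (((hasDerivAt_id (x : ℂ)).const_sub z).cexp).const_add 1
  refine ((hasDerivAt_log hslit).comp (x : ℂ) hinner).comp_ofReal.congr_deriv ?_
  have hprod : exp (x - z) * exp (z - x) = 1 := by rw [← exp_add]; simp
  have hne : 1 + exp (x - z) ≠ 0 :=
    slitPlane_ne_zero (one_add_exp_mem_slitPlane (by simpa using hz))
  field_simp [hne, slitPlane_ne_zero hslit]
  linear_combination -hprod

theorem continuous_log_one_add_exp_sub (hz : |z.im| < Real.pi) :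
    Continuous fun x : ℝ => log (1 + exp (z - x)) :=
  continuous_iff_continuousAt.2 fun x => (hasDerivAt_log_one_add_exp_sub hz x).continuousAt

theorem isBigO_log_one_add_exp_sub (z : ℂ) :
    (fun x : ℝ => log (1 + exp (z - x))) =O[atTop] fun x => Real.exp (-x) := by
  have hsmall : Tendsto (fun x : ℝ => exp (z - x)) atTop (𝓝 0) := by
    refine tendsto_exp_comap_re_atBot.comp (tendsto_comap_iff.2 ?_)
    simpa [Function.comp_def, sub_eq_add_neg] using
      tendsto_atBot_add_const_left _ z.re tendsto_neg_atTop_atBot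
  refine IsBigO.of_bound (3 / 2 * Real.exp z.re) ?_
  filter_upwards [hsmall.eventually (Metric.closedBall_mem_nhds 0 one_half_pos)] with x hx
  calc ‖log (1 + exp (z - x))‖ ≤ 3 / 2 * ‖exp (z - x)‖ :=
        norm_log_one_add_half_le_self (by simpa using hx)
    _ = 3 / 2 * Real.exp z.re * ‖Real.exp (-x)‖ := by
        rw [norm_exp, Real.norm_of_nonneg (Real.exp_pos _).le, mul_assoc, ← Real.exp_add]
        simp [sub_eq_add_neg]

theorem integrableOn_log_one_add_exp_sub (hz : |z.im| < Real.pi) :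
    IntegrableOn (fun x : ℝ => log (1 + exp (z - x))) (Ioi 0) :=
  ((continuous_log_one_add_exp_sub hz).continuousOn.locallyIntegrableOn measurableSet_Ici
    |>.integrableOn_of_isBigO_atTop (isBigO_log_one_add_exp_sub z)
      ⟨Ioi 0, Ioi_mem_atTop 0, integrableOn_exp_neg_Ioi 0⟩).mono_set Ioi_subset_Ici_self

theorem tendsto_mul_log_one_add_exp_sub (z : ℂ) :
    Tendsto (fun x : ℝ => x * log (1 + exp (z - x))) atTop (𝓝 0) := by
  have hx : (fun x : ℝ => (x : ℂ)) =O[atTop] fun x => x := isBigO_of_le _ fun x => by simp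
  refine (hx.mul (isBigO_log_one_add_exp_sub z)).trans_tendsto ?_
  simpa using Real.tendsto_pow_mul_exp_neg_atTop_nhds_zero 1

theorem integral_div_one_add_exp_sub_eq_integral_log (hz : |z.im| < Real.pi) :
    ∫ x in Ioi (0 : ℝ), (x : ℂ) / (1 + exp (x - z)) =
      ∫ x in Ioi (0 : ℝ), log (1 + exp (z - x)) := by
  have hparts := integral_Ioi_mul_deriv_eq_deriv_mul (a := 0) (a' := 0) (b' := 0)
    (u := fun x : ℝ => (x : ℂ)) (u' := fun _ => 1)
    (fun x _ => ofRealCLM.hasDerivAt) (fun x _ => hasDerivAt_log_one_add_exp_sub hz x)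
    ((integrableOn_div_one_add_exp_sub hz).neg.congr_fun (fun x _ => by simp [div_eq_mul_inv])
      measurableSet_Ioi)
    (by simpa [Pi.mul_def] using integrableOn_log_one_add_exp_sub hz)
    (by simpa using ((continuous_ofReal.mul (continuous_log_one_add_exp_sub hz)).tendsto 0)
      |>.mono_left nhdsWithin_le_nhds)
    (tendsto_mul_log_one_add_exp_sub z)
  simpa [div_eq_mul_inv, integral_neg] using hparts

theorem integral_log_one_add_exp_sub (z : ℂ) :
    ∫ x in Ioi (0 : ℝ), log (1 + exp (z - x)) =
      ∫ t in Ioc (0 : ℝ) 1, log (1 + exp z * t) / t := by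
  rw [← integral_comp_exp_neg_Ioi_zero]
  refine setIntegral_congr_fun measurableSet_Ioi fun x _ => ?_
  rw [real_smul, mul_div_cancel₀ _ (ofReal_ne_zero.2 (Real.exp_pos _).ne'), ofReal_exp,
    ofReal_neg, ← exp_add, sub_eq_add_neg]

end FermiDirac

theorem stmt_5 (z : ℂ) (hz : |z.im| < Real.pi) :
    MeasureTheory.IntegrableOn
        (fun ξ : ℝ => (ξ : ℂ) / (1 + Complex.exp ((ξ : ℂ) - z))) (Set.Ioi 0) ∧
    ∫ ξ in Set.Ioi (0 : ℝ), (ξ : ℂ) / (1 + Complex.exp ((ξ : ℂ) - z))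
      = -Li2 (-Complex.exp z) := by
  refine ⟨integrableOn_div_one_add_exp_sub hz, ?_⟩
  rw [integral_div_one_add_exp_sub_eq_integral_log hz, integral_log_one_add_exp_sub, Li2, neg_neg,
    intervalIntegral.integral_of_le zero_le_one]
  simp only [neg_mul, sub_neg_eq_add]
end

section
/- The Fourier transform of the hyperbolic secant: for every real w, ∫_ℝ e^{2πiwx}/cosh(πx) dx = 1/cosh(πw). -/
/-!
Substituting `t = e^{2πx}` turns the integral into `1/π` times the Mellin transform of
`1/(1+t)` at `s = 1/2 + iw`. The substitution `y = t/(1+t)` identifies that Mellin transform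
with the Beta integral `B(s, 1-s) = Γ(s)Γ(1-s) = π / sin(πs)`, and
`sin(π(1/2 + iw)) = cosh(πw)`.
-/

open MeasureTheory Set Complex
open scoped Real

theorem image_div_one_add_Ioi : (fun t : ℝ => t / (1 + t)) '' Ioi 0 = Ioo 0 1 := by
  ext y
  constructor
  · rintro ⟨t, ht : 0 < t, rfl⟩
    exact ⟨by positivity, (div_lt_one (by positivity)).2 (by linarith)⟩
  · rintro ⟨hy0, hy1⟩
    refine ⟨y / (1 - y), div_pos hy0 (by linarith), ?_⟩
    have : 1 - y ≠ 0 := by linarith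
    field_simp
    ring

theorem injOn_div_one_add_Ioi : InjOn (fun t : ℝ => t / (1 + t)) (Ioi 0) := by
  intro t ht t' ht' h
  simp only [mem_Ioi] at ht ht'
  field_simp at h
  linarith

theorem hasDerivAt_div_one_add {t : ℝ} (ht : 1 + t ≠ 0) :
    HasDerivAt (fun t : ℝ => t / (1 + t)) (1 / (1 + t) ^ 2) t := by
  simpa using (hasDerivAt_id' t).fun_div ((hasDerivAt_id' t).const_add 1) ht

theorem Complex.betaIntegral_eq_integral_Ioi (u v : ℂ) :
    betaIntegral u v = ∫ t in Ioi (0 : ℝ), (t : ℂ) ^ (u - 1) / (1 + t) ^ (u + v) := by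
  rw [betaIntegral, intervalIntegral.integral_of_le zero_le_one, integral_Ioc_eq_integral_Ioo,
    ← image_div_one_add_Ioi, integral_image_eq_integral_abs_deriv_smul measurableSet_Ioi
      (fun t ht => (hasDerivAt_div_one_add (by simp at ht; linarith)).hasDerivWithinAt)
      injOn_div_one_add_Ioi]
  refine setIntegral_congr_fun measurableSet_Ioi fun t (ht : 0 < t) => ?_
  have hp : (0 : ℝ) < 1 + t := by linarith
  have hpc : (1 + t : ℂ) ≠ 0 := by exact_mod_cast hp.ne'
  have hinv : ∀ z : ℂ, ((1 + t : ℝ)⁻¹ : ℂ) ^ z = ((1 + t : ℝ) : ℂ) ^ (-z) := fun z => by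
    rw [inv_cpow _ _ (by rw [arg_ofReal_of_nonneg hp.le]; exact Real.pi_ne_zero.symm), cpow_neg]
  have hsub : (1 : ℂ) - ((t / (1 + t) : ℝ) : ℂ) = ((1 + t : ℝ)⁻¹ : ℂ) := by
    push_cast; field_simp; ring
  rw [abs_of_pos (by positivity), real_smul, hsub, div_eq_mul_inv (t : ℝ),
    ofReal_mul, mul_cpow_ofReal_nonneg ht.le (by positivity), ofReal_inv, hinv, hinv]
  push_cast
  rw [div_eq_mul_inv _ (_ ^ (u + v)), ← cpow_neg, show -(u + v) = -2 + -(u - 1) + -(v - 1) by ring,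
    cpow_add _ _ hpc, cpow_add _ _ hpc, cpow_neg _ 2, cpow_ofNat]
  ring

theorem mellin_one_div_one_add {s : ℂ} (hs₀ : 0 < s.re) (hs₁ : s.re < 1) :
    mellin (fun t : ℝ => 1 / (1 + (t : ℂ))) s = π / sin (π * s) := by
  have hbeta := betaIntegral_eq_integral_Ioi s (1 - s)
  simp only [add_sub_cancel, cpow_one] at hbeta
  have hGamma := Gamma_mul_Gamma_eq_betaIntegral hs₀ (show 0 < (1 - s).re by simpa using hs₁)
  rw [add_sub_cancel, Gamma_one, one_mul] at hGamma
  rw [← Gamma_mul_Gamma_one_sub, hGamma, hbeta, mellin]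
  simp only [smul_eq_mul, mul_one_div]

theorem mellin_eq_integral_cexp_smul_comp_exp {E : Type*} [NormedAddCommGroup E] [NormedSpace ℂ E]
    (f : ℝ → E) (s : ℂ) : mellin f s = ∫ x : ℝ, cexp (s * x) • f (rexp x) := by
  rw [mellin, ← Real.range_exp, ← image_univ, integral_image_eq_integral_abs_deriv_smul
    MeasurableSet.univ (fun x _ => (Real.hasDerivAt_exp x).hasDerivWithinAt)
    Real.exp_injective.injOn, setIntegral_univ]
  congr with x
  rw [abs_of_pos (Real.exp_pos x), ← Complex.coe_smul, smul_smul, ofReal_exp,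
    cpow_def_of_ne_zero (Complex.exp_ne_zero _), ← ofReal_exp, ← ofReal_log (Real.exp_pos x).le,
    Real.log_exp, ofReal_exp, ← Complex.exp_add]
  ring_nf

theorem Complex.exp_div_one_add_exp_two_mul (z : ℂ) :
    cexp z / (1 + cexp (2 * z)) = (2 * cosh z)⁻¹ := by
  have hz := Complex.exp_ne_zero z
  rw [two_cosh, Complex.exp_neg, two_mul, Complex.exp_add,
    show cexp z + (cexp z)⁻¹ = (1 + cexp z * cexp z) / cexp z by field_simp; ring, inv_div]

theorem stmt_7 (w : ℝ) :
    ∫ x : ℝ, Complex.exp (2 * Real.pi * Complex.I * (w : ℂ) * (x : ℂ))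
        / Complex.cosh (Real.pi * (x : ℂ))
      = 1 / Complex.cosh (Real.pi * (w : ℂ)) := by
  set s : ℂ := 1 / 2 + w * I
  have hsin : sin (π * s) = cosh (π * w) := by
    rw [show (π : ℂ) * s = π * w * I + π / 2 by ring, sin_add_pi_div_two, cos_mul_I]
  have hmellin := mellin_one_div_one_add (s := s) (by simp [s]) (by norm_num [s])
  rw [hsin, mellin_eq_integral_cexp_smul_comp_exp] at hmellin
  have hscale := Measure.integral_comp_mul_left
    (fun u : ℝ => cexp (s * u) • (1 / (1 + (rexp u : ℂ)))) (2 * π)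
  have hpoint : ∀ x : ℝ, cexp (s * ↑(2 * π * x)) • (1 / (1 + (rexp (2 * π * x) : ℂ))) =
      cexp (2 * π * I * w * x) / cosh (π * x) / 2 := by
    intro x
    rw [smul_eq_mul, show s * ↑(2 * π * x) = 2 * π * I * w * x + π * x by push_cast; ring,
      Complex.exp_add, ofReal_exp, show ((2 * π * x : ℝ) : ℂ) = 2 * (π * x) by push_cast; ring,
      mul_one_div, mul_div_assoc, exp_div_one_add_exp_two_mul]
    ring
  rw [funext hpoint, integral_div, hmellin, abs_of_pos (by positivity), real_smul,
    div_eq_iff two_ne_zero] at hscale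
  rw [hscale]
  push_cast
  field_simp
end

section
/- Let f be holomorphic on the strip |Im(z)| < π and fix z real. Then the Borel transform of the formal power series φ_f(τ,z) = ∑_{n≥1} (B_{2n}(1/2)/(2n)!)·f^{(2n)}(z)·(2πi)^{2n-1}·τ^{2n-1}, namely G_f(ξ,z) = ∑_{n≥1} (B_{2n}(1/2)/(2n)!)·(f^{(2n)}(z)/(2n-2)!)·(2πi)^{2n-1}·ξ^{2n-2}, coincides (as a convergent power series near ξ = 0) with (i/(2π)) ∑_{n≥1} ((-1)^n/n²)·(f''(z + ξ/n) + f''(z - ξ/n)), provided f'' is bounded on the strip. -/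
/-!
Expand `f''` in its Taylor series at `z`. In `f''(z + w) + f''(z - w)` only the even powers of `w`
survive, and since the weights `(-1)^n / n²` are absolutely summable while `‖ξ / n‖ ≤ ‖ξ‖`, the
double series over `n` and the Taylor index converges absolutely and may be summed in either
order. Summing over `n` first produces the coefficients `∑ (-1)^n / n^(2k+2)`, which are values
of the Fourier series of the periodic Bernoulli function `B_{2k+2}` at `x = 1/2`.
-/

open Real
open scoped Nat

section EvenPart

variable {𝕜 E : Type*} [NontriviallyNormedField 𝕜] [NormedAddCommGroup E] [NormedSpace 𝕜 E]
  {g : 𝕜 → E} {p : FormalMultilinearSeries 𝕜 𝕜 E} {c : 𝕜} {r : ENNReal}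

theorem HasFPowerSeriesOnBall.hasSum_add_sub (hg : HasFPowerSeriesOnBall g p c r) {w : 𝕜}
    (hw : w ∈ Metric.eball 0 r) :
    HasSum (fun k => (2 : ℕ) • w ^ (2 * k) • p.coeff (2 * k)) (g (c + w) + g (c - w)) := by
  have hsum := (hg.hasSum hw).add (hg.hasSum (by simpa using hw : -w ∈ Metric.eball 0 r))
  simp only [FormalMultilinearSeries.apply_eq_pow_smul_coeff, ← sub_eq_add_neg] at hsum
  have hodd : ∀ j ∉ Set.range (2 * ·), w ^ j • p.coeff j + (-w) ^ j • p.coeff j = 0 := by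
    intro j hj
    have : Odd j := Nat.not_even_iff_odd.mp fun ⟨i, hi⟩ => hj ⟨i, by simp only; omega⟩
    rw [this.neg_pow, neg_smul, add_neg_cancel]
  convert (Function.Injective.hasSum_iff (mul_right_injective₀ two_ne_zero) hodd).mpr hsum
    using 2 with k
  simp [(even_two_mul k).neg_pow, two_nsmul]

theorem mul_mem_eball_zero {a ξ : 𝕜} (ha : ‖a‖ ≤ 1) (hξ : ξ ∈ Metric.eball 0 r) :
    a * ξ ∈ Metric.eball 0 r := by
  rw [Metric.mem_eball, edist_zero_right] at hξ ⊢
  rw [enorm_mul]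
  exact lt_of_le_of_lt (mul_le_of_le_one_left' (by simpa [← ofReal_norm] using ha)) hξ

theorem HasFPowerSeriesOnBall.hasSum_tsum_smul_add_sub [CompleteSpace 𝕜] [CompleteSpace E]
    (hg : HasFPowerSeriesOnBall g p c r) {a d : ℕ → 𝕜} (ha : Summable fun n => ‖a n‖)
    (hd : ∀ n, ‖d n‖ ≤ 1) {ξ : 𝕜} (hξ : ξ ∈ Metric.eball 0 r) :
    HasSum (fun k => (∑' n, a n * d n ^ (2 * k)) • (2 : ℕ) • ξ ^ (2 * k) • p.coeff (2 * k))
      (∑' n, a n • (g (c + d n * ξ) + g (c - d n * ξ))) := by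
  set T : ℕ × ℕ → E := fun q => a q.1 • (2 : ℕ) • (d q.1 * ξ) ^ (2 * q.2) • p.coeff (2 * q.2)
  have hcoeff : Summable fun k => ‖ξ‖ ^ (2 * k) * ‖p.coeff (2 * k)‖ := by
    have := (p.summable_norm_apply (Metric.eball_subset_eball hg.r_le hξ)).comp_injective
      (mul_right_injective₀ two_ne_zero)
    simpa [Function.comp_def, norm_smul] using this
  have hT : Summable T := by
    refine .of_norm_bounded ((ha.mul_of_nonneg (hcoeff.mul_left 2) (fun _ => norm_nonneg _)
      fun _ => by positivity)) fun q => ?_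
    have hdq : ‖d q.1‖ ^ (2 * q.2) ≤ 1 := pow_le_one₀ (norm_nonneg _) (hd q.1)
    calc ‖T q‖ ≤ ‖a q.1‖ * (2 * ‖(d q.1 * ξ) ^ (2 * q.2) • p.coeff (2 * q.2)‖) := by
          rw [norm_smul, two_nsmul]
          gcongr
          exact (norm_add_le _ _).trans_eq (two_mul _).symm
      _ ≤ ‖a q.1‖ * (2 * (‖ξ‖ ^ (2 * q.2) * ‖p.coeff (2 * q.2)‖)) := by
          rw [norm_smul, norm_pow, norm_mul, mul_pow]
          gcongr
          exact mul_le_of_le_one_left (by positivity) hdq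
  have hrows : ∀ n, HasSum (fun k => T (n, k)) (a n • (g (c + d n * ξ) + g (c - d n * ξ))) :=
    fun n => (hg.hasSum_add_sub (mul_mem_eball_zero (hd n) hξ)).const_smul (a n)
  have hcols : ∀ k, HasSum (fun n => T (n, k))
      ((∑' n, a n * d n ^ (2 * k)) • (2 : ℕ) • ξ ^ (2 * k) • p.coeff (2 * k)) := by
    intro k
    have hs : Summable fun n => a n * d n ^ (2 * k) := by
      refine .of_norm_bounded ha fun n => ?_
      rw [norm_mul, norm_pow]
      exact mul_le_of_le_one_right (norm_nonneg _) (pow_le_one₀ (norm_nonneg _) (hd n))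
    convert hs.hasSum.smul_const ((2 : ℕ) • ξ ^ (2 * k) • p.coeff (2 * k)) using 1
    ext n
    simp only [T, mul_pow, mul_smul, smul_comm (d n ^ (2 * k)) (2 : ℕ)]
  have hswap := (Equiv.prodComm ℕ ℕ).hasSum_iff.mpr hT.hasSum
  rw [(hT.hasSum.prod_fiberwise hrows).tsum_eq]
  exact hswap.prod_fiberwise hcols

end EvenPart

theorem hasSum_neg_one_pow_div_succ_pow {k : ℕ} (hk : k ≠ 0) :
    HasSum (fun n : ℕ => (-1 : ℝ) ^ (n + 1) / ((n : ℝ) + 1) ^ (2 * k))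
      ((-1) ^ (k + 1) * (2 * π) ^ (2 * k) / 2 / (2 * k)! * bernoulliFun (2 * k) (1 / 2)) := by
  have h := (hasSum_nat_add_iff' 1).mpr
    (hasSum_one_div_nat_pow_mul_cos hk (x := 1 / 2) (by norm_num))
  have hterm (n : ℕ) : 1 / ((n + 1 : ℕ) : ℝ) ^ (2 * k) * cos (2 * π * (n + 1 : ℕ) * (1 / 2))
      = (-1) ^ (n + 1) / ((n : ℝ) + 1) ^ (2 * k) := by
    rw [show 2 * π * ((n + 1 : ℕ) : ℝ) * (1 / 2) = ((n + 1 : ℕ) : ℝ) * π by ring, cos_nat_mul_pi]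
    push_cast
    ring
  simp only [hterm, Finset.sum_range_one, Nat.cast_zero, zero_pow (by omega : 2 * k ≠ 0), div_zero,
    zero_mul, sub_zero] at h
  exact h

theorem bernoulliFun_ratCast (k : ℕ) (x : ℚ) :
    bernoulliFun k x = (((Polynomial.bernoulli k).eval x : ℚ) : ℝ) := by
  rw [bernoulliFun, Polynomial.eval_map_algebraMap, ← map_ratCast (algebraMap ℚ ℝ),
    Polynomial.aeval_algebraMap_apply]
  simp

theorem bernoulli_div_factorial_mul_two_pi_I_pow_eq_tsum (k : ℕ) :
    (((Polynomial.bernoulli (2 * (k + 1))).eval (1 / 2 : ℚ) : ℚ) : ℂ) / (2 * (k + 1))! *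
        (2 * π * Complex.I) ^ (2 * k + 1)
      = Complex.I / π * ∑' n : ℕ, (-1 : ℂ) ^ (n + 1) / ((n : ℂ) + 1) ^ (2 * (k + 1)) := by
  have h := Complex.hasSum_ofReal.mpr (hasSum_neg_one_pow_div_succ_pow (k := k + 1) (by omega))
  push_cast at h
  rw [h.tsum_eq, show (1 / 2 : ℝ) = ((1 / 2 : ℚ) : ℝ) by norm_num, bernoulliFun_ratCast,
    mul_pow, pow_succ Complex.I, pow_mul Complex.I, Complex.I_sq]
  push_cast
  field_simp
  ring

theorem norm_natCast_add_one (n : ℕ) : ‖(n : ℂ) + 1‖ = n + 1 := by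
  exact_mod_cast Complex.norm_natCast (n + 1)

theorem summable_norm_neg_one_pow_div_succ_sq :
    Summable fun n : ℕ => ‖(-1 : ℂ) ^ (n + 1) / ((n : ℂ) + 1) ^ 2‖ := by
  refine ((summable_nat_add_iff 1).mpr (Real.summable_one_div_nat_pow.mpr one_lt_two)).congr
    fun n => ?_
  simp [norm_natCast_add_one]

theorem norm_inv_natCast_add_one_le_one (n : ℕ) : ‖((n : ℂ) + 1)⁻¹‖ ≤ 1 := by
  rw [norm_inv, norm_natCast_add_one]
  exact inv_le_one_of_one_le₀ (by linarith [n.cast_nonneg (α := ℝ)])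

theorem iteratedDeriv_iteratedDeriv {𝕜 F : Type*} [NontriviallyNormedField 𝕜]
    [NormedAddCommGroup F] [NormedSpace 𝕜 F] (f : 𝕜 → F) (m n : ℕ) :
    iteratedDeriv m (iteratedDeriv n f) = iteratedDeriv (m + n) f := by
  simp only [iteratedDeriv_eq_iterate, Function.iterate_add_apply]

theorem stmt_14_general (f : ℂ → ℂ)
    (hf : DifferentiableOn ℂ f {w : ℂ | |w.im| < Real.pi})
    (z : ℝ) :
    ∃ ε > (0 : ℝ), ∀ ξ : ℂ, ‖ξ‖ < ε →
      ∑' n : ℕ,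
          ((((Polynomial.bernoulli (2 * (n + 1))).eval (1/2 : ℚ) : ℚ) : ℂ)
              / ((2 * (n + 1)).factorial : ℂ)) *
            (iteratedDeriv (2 * (n + 1)) f (z : ℂ) / ((2 * n).factorial : ℂ)) *
            (2 * (Real.pi : ℂ) * Complex.I) ^ (2 * n + 1) * ξ ^ (2 * n)
        = (Complex.I / (2 * Real.pi)) *
            ∑' n : ℕ, ((-1 : ℂ) ^ (n + 1) / ((n : ℂ) + 1) ^ 2) *
              (iteratedDeriv 2 f ((z : ℂ) + ξ / ((n : ℂ) + 1)) +
               iteratedDeriv 2 f ((z : ℂ) - ξ / ((n : ℂ) + 1))) := by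
  have hfz : AnalyticAt ℂ f z := hf.analyticAt <|
    (isOpen_lt Complex.continuous_im.abs continuous_const).mem_nhds (by simp [pi_pos])
  have hf''z : AnalyticAt ℂ (iteratedDeriv 2 f) z := by
    rw [iteratedDeriv_eq_iterate]
    exact hfz.iterated_deriv 2
  obtain ⟨r, hr⟩ := hf''z.hasFPowerSeriesAt
  obtain ⟨ε, hε, hεr⟩ := ENNReal.lt_iff_exists_nnreal_btwn.mp hr.r_pos
  refine ⟨ε, by exact_mod_cast hε, fun ξ hξ => ?_⟩
  have hξr : ξ ∈ Metric.eball 0 r := by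
    rw [Metric.mem_eball, edist_zero_right]
    exact lt_trans (by exact_mod_cast hξ) hεr
  have hweight (k n : ℕ) : (-1 : ℂ) ^ (n + 1) / ((n : ℂ) + 1) ^ 2 * ((n : ℂ) + 1)⁻¹ ^ (2 * k)
      = (-1 : ℂ) ^ (n + 1) / ((n : ℂ) + 1) ^ (2 * (k + 1)) := by
    rw [inv_pow, ← div_eq_mul_inv, div_div, ← pow_add]
    ring_nf
  have key := hr.hasSum_tsum_smul_add_sub summable_norm_neg_one_pow_div_succ_sq
    norm_inv_natCast_add_one_le_one hξr
  simp only [FormalMultilinearSeries.coeff_ofScalars, iteratedDeriv_iteratedDeriv, hweight,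
    smul_eq_mul, nsmul_eq_mul, Nat.cast_ofNat, ← div_eq_inv_mul ξ] at key
  rw [← key.tsum_eq, ← tsum_mul_left]
  refine tsum_congr fun k => ?_
  rw [show 2 * k + 2 = 2 * (k + 1) by ring]
  linear_combination (iteratedDeriv (2 * (k + 1)) f z / (2 * k)! * ξ ^ (2 * k)) *
    bernoulli_div_factorial_mul_two_pi_I_pow_eq_tsum k

theorem stmt_14 (f : ℂ → ℂ)
    (hf : DifferentiableOn ℂ f {w : ℂ | |w.im| < Real.pi})
    (hbd : ∃ C : ℝ, ∀ w : ℂ, |w.im| < Real.pi →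
      ‖iteratedDeriv 2 f w‖ ≤ C)
    (z : ℝ) :
    ∃ ε > (0 : ℝ), ∀ ξ : ℂ, ‖ξ‖ < ε →
      ∑' n : ℕ,
          ((((Polynomial.bernoulli (2 * (n + 1))).eval (1/2 : ℚ) : ℚ) : ℂ)
              / ((2 * (n + 1)).factorial : ℂ)) *
            (iteratedDeriv (2 * (n + 1)) f (z : ℂ) / ((2 * n).factorial : ℂ)) *
            (2 * (Real.pi : ℂ) * Complex.I) ^ (2 * n + 1) * ξ ^ (2 * n)
        = (Complex.I / (2 * Real.pi)) *
            ∑' n : ℕ, ((-1 : ℂ) ^ (n + 1) / ((n : ℂ) + 1) ^ 2) *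
              (iteratedDeriv 2 f ((z : ℂ) + ξ / ((n : ℂ) + 1)) +
               iteratedDeriv 2 f ((z : ℂ) - ξ / ((n : ℂ) + 1))) :=
  stmt_14_general f hf z
end
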